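/- In the Steiner Tree instance G_φ constructed from a SAT formula φ with k variables and ℓ clauses, there is a Steiner tree connecting all terminals of cost at most 12k + Σ_{i=1}^{ℓ} 11^{i+1} if and only if φ is satisfiable. -/

import Mathlib

open SimpleGraph Set

namespace HD

variable {V : Type*}

/-- Weighted length of a walk: sum of the weights of its edges. -/
noncomputable def wlen (w : Sym2 V → ℝ) {G : SimpleGraph V} {u v : V} (p : G.Walk u v) : ℝ :=
  (p.darts.map fun d => w s(d.toProd.1, d.toProd.2)).sum

/-- Shortest-path distance in a weighted graph. -/
noncomputable def gdist (G : SimpleGraph V) (w : Sym2 V → ℝ) (u v : V) : ℝ :=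
  sInf {L | ∃ p : G.Walk u v, wlen w p = L}

/-- Ball of radius `r` around `v`. -/
def ball (G : SimpleGraph V) (w : Sym2 V → ℝ) (v : V) (r : ℝ) : Set V :=
  {u | gdist G w v u ≤ r}

/-- `S` is a shortest path cover for scale `r`: it hits (the vertex set of) every
shortest path of length in `(r, 2r]`. -/
def IsSPC (G : SimpleGraph V) (w : Sym2 V → ℝ) (S : Set V) (r : ℝ) : Prop :=
  ∀ u v : V, ∀ p : G.Walk u v, p.IsPath → wlen w p = gdist G w u v →
    r < wlen w p → wlen w p ≤ 2 * r → ∃ x ∈ S, x ∈ p.support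

/-- `S` is locally `h`-sparse for scale `r`: every ball of radius `2r` contains
at most `h` vertices of `S`. -/
def Sparse (G : SimpleGraph V) (w : Sym2 V → ℝ) (S : Set V) (r : ℝ) (h : ℕ) : Prop :=
  ∀ v : V, (S ∩ ball G w v (2 * r)).ncard ≤ h

/-- The highway dimension of `(G, w)` is at most `h`: for every scale there
is a locally `h`-sparse shortest path cover. -/
def HDLe (G : SimpleGraph V) (w : Sym2 V → ℝ) (h : ℕ) : Prop :=
  ∀ r : ℝ, 0 < r → ∃ S : Set V, IsSPC G w S r ∧ Sparse G w S r h

/-- A metric graph: edge weights are positive and every edge is a shortest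
path between its endpoints. -/
def MetricGraph (G : SimpleGraph V) (w : Sym2 V → ℝ) : Prop :=
  (∀ e ∈ G.edgeSet, 0 < w e) ∧ ∀ u v : V, G.Adj u v → gdist G w u v = w s(u, v)

/-- The subgraph `G_{≤ t}` spanned by all edges of weight at most `t`. -/
def leSub (G : SimpleGraph V) (w : Sym2 V → ℝ) (t : ℝ) : SimpleGraph V where
  Adj u v := G.Adj u v ∧ w s(u, v) ≤ t
  symm := by
    constructor
    intro u v hv
    obtain ⟨h1, h2⟩ := hv
    exact ⟨h1.symm, by rwa [Sym2.eq_swap] at h2⟩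
  loopless := ⟨fun v hv => G.loopless.irrefl v hv.1⟩

/-- A tree decomposition of `G`: a tree `T` on index type `ι` with bags covering
all vertices and all edges, such that the bags containing any fixed vertex induce
a connected subtree. -/
def IsTreeDecomp (G : SimpleGraph V) {ι : Type*} (T : SimpleGraph ι) (bag : ι → Set V) : Prop :=
  T.IsTree ∧ (∀ v : V, ∃ i, v ∈ bag i) ∧
    (∀ u v : V, G.Adj u v → ∃ i, u ∈ bag i ∧ v ∈ bag i) ∧
    ∀ v : V, (T.induce {i | v ∈ bag i}).Connected

end HD


/-- Vertices of the graph `G_φ` built from a SAT formula with `k` variables and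
`ℓ` clauses. -/
inductive PhiVert (k l : ℕ) : Type
  | t : Fin k → PhiVert k l
  | u : Fin k → PhiVert k l
  | f : Fin k → PhiVert k l
  | root : PhiVert k l
  | clause : Fin l → PhiVert k l
  deriving DecidableEq

/-- The adjacency relation of `G_φ`: the paths `t_x — u_x — f_x`, the root joined to
all `t_x` and `f_x`, and each clause vertex `v_i` joined to `t_x` for positive
occurrences of `x` in `C_i` and to `f_x` for negative occurrences.  Here the formula is
encoded as `φ : Fin l → Fin k → Option Bool`, with `φ i x = some true` meaning `x`
occurs positively in clause `i`, `some false` negatively, `none` not at all. -/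
def phiAdj {k l : ℕ} (φ : Fin l → Fin k → Option Bool)
    (a b : PhiVert k l) : Prop :=
  (∃ x : Fin k, (a = .t x ∧ b = .u x) ∨ (a = .u x ∧ b = .t x)
      ∨ (a = .u x ∧ b = .f x) ∨ (a = .f x ∧ b = .u x))
  ∨ (∃ x : Fin k, (a = .root ∧ b = .t x) ∨ (a = .t x ∧ b = .root)
      ∨ (a = .root ∧ b = .f x) ∨ (a = .f x ∧ b = .root))
  ∨ (∃ (i : Fin l) (x : Fin k), φ i x = some true ∧
      ((a = .clause i ∧ b = .t x) ∨ (a = .t x ∧ b = .clause i)))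
  ∨ (∃ (i : Fin l) (x : Fin k), φ i x = some false ∧
      ((a = .clause i ∧ b = .f x) ∨ (a = .f x ∧ b = .clause i)))

/-- The terminals of the Steiner Tree instance `G_φ`: the root, all `u_x`, and all
clause vertices `v_i`. -/
def phiTerminals (k l : ℕ) : Set (PhiVert k l) :=
  {v | (∃ x : Fin k, v = .u x) ∨ v = .root ∨ ∃ i : Fin l, v = .clause i}


/-!
Let `T` be a connected subgraph of `G_φ` containing the terminals, with `L` literal vertices
(`t_x` or `f_x`), and `U`, `R`, `D` edges at the `u_x`, at the root and at the clause vertices.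
Each `u_x` needs an edge, which ends at a literal vertex of `x`, so `k ≤ U ≤ L`; each `v_i` needs
an edge, so `l ≤ D`; and connectivity gives `L + k + 1 + l ≤ U + R + D + 1`. The cost is
`U + 11 R + Σ_{clause edges} 11^(i+2) ≥ U + 11 R + Σ_i 11^(i+2) + 121 (D - l)`, so the budget forces
`D = l`, `R = k` and then `L ≤ k`: every variable has exactly one literal vertex in `T`, which
defines a satisfying assignment, since every `v_i` is joined to a literal vertex of `C_i`.
Conversely, for a satisfying assignment the edges `root — ℓ_x — u_x` for the true literals `ℓ_x`,
together with one edge from each `v_i` to a true literal of `C_i`, cost exactly the budget.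
-/

open scoped Finset

theorem finsum_mem_eq_sum_filter_of_injective {ι α M : Type*} [Fintype ι] [AddCommMonoid M]
    {g : ι → α} (hg : Function.Injective g) {s : Set α} (hs : s ⊆ range g)
    [DecidablePred (g · ∈ s)] (f : α → M) :
    ∑ᶠ a ∈ s, f a = ∑ i with g i ∈ s, f (g i) := by
  calc ∑ᶠ a ∈ s, f a = ∑ᶠ a ∈ g '' (g ⁻¹' s), f a := by rw [image_preimage_eq_of_subset hs]
    _ = ∑ i with g i ∈ s, f (g i) := by
      rw [finsum_mem_image hg.injOn, ← finsum_mem_coe_finset]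
      congr
      ext
      simp

theorem Finset.sum_add_mul_card_le_sum_fst {ι β : Type*} [Fintype ι] (C : Finset (ι × β))
    (hC : ∀ i, ∃ q ∈ C, q.1 = i) {a : ι → ℝ} {m : ℝ} (ham : ∀ i, m ≤ a i) :
    ∑ i, a i + m * #C ≤ ∑ q ∈ C, a q.1 + m * Fintype.card ι := by
  classical
  choose sec hsecC hsec using hC
  have hinj : Function.Injective sec := fun i j h => by rw [← hsec i, ← hsec j, h]
  have key : ∑ i, (a i - m) ≤ ∑ q ∈ C, (a q.1 - m) := calc
    ∑ i, (a i - m) = ∑ q ∈ univ.image sec, (a q.1 - m) := by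
      rw [sum_image hinj.injOn]; simp only [hsec]
    _ ≤ ∑ q ∈ C, (a q.1 - m) :=
      sum_le_sum_of_subset_of_nonneg (by simpa [Finset.subset_iff] using hsecC)
        fun q _ _ => sub_nonneg.2 (ham q.1)
  simp only [sum_sub_distrib, sum_const, card_univ, nsmul_eq_mul] at key
  linarith

namespace SimpleGraph.Subgraph

variable {V : Type*} {G : SimpleGraph V}

def ofEdgeSet (S : Set V) (F : Set (Sym2 V)) (hFG : F ⊆ G.edgeSet)
    (hFS : ∀ e ∈ F, ∀ v ∈ e, v ∈ S) : G.Subgraph where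
  verts := S
  Adj a b := s(a, b) ∈ F
  adj_sub h := hFG h
  edge_vert h := hFS _ h _ (Sym2.mem_mk_left _ _)
  symm := ⟨fun _ _ h => by rwa [Sym2.eq_swap]⟩

@[simp]
theorem edgeSet_ofEdgeSet (S : Set V) (F : Set (Sym2 V)) (hFG : F ⊆ G.edgeSet)
    (hFS : ∀ e ∈ F, ∀ v ∈ e, v ∈ S) : (ofEdgeSet S F hFG hFS).edgeSet = F := by
  ext e
  induction e using Sym2.ind
  exact Subgraph.mem_edgeSet

theorem Connected.ncard_verts_le_ncard_edgeSet_add_one {H : G.Subgraph} (h : H.Connected) :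
    H.verts.ncard ≤ H.edgeSet.ncard + 1 := by
  have := h.coe.card_vert_le_card_edgeSet_add_one
  rwa [Nat.card_coe_set_eq, Nat.card_coe_set_eq, ← Set.ncard_image_of_injective H.coe.edgeSet
    (Sym2.map.injective Subtype.val_injective), image_coe_edgeSet_coe] at this

theorem connected_of_forall_reachable {H : G.Subgraph} {r : V} (hr : r ∈ H.verts)
    (h : ∀ v (hv : v ∈ H.verts), H.coe.Reachable ⟨r, hr⟩ ⟨v, hv⟩) : H.Connected :=
  Subgraph.connected_iff.2 ⟨⟨fun a b => (h a a.2).symm.trans (h b b.2)⟩, ⟨r, hr⟩⟩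

theorem Connected.exists_adj {H : G.Subgraph} (h : H.Connected) {u v : V} (hu : u ∈ H.verts)
    (hv : v ∈ H.verts) (huv : u ≠ v) : ∃ w, H.Adj u w := by
  have : Nontrivial H.verts := ⟨⟨⟨u, hu⟩, ⟨v, hv⟩, by simpa using huv⟩⟩
  exact h.preconnected.exists_adj_of_nontrivial ⟨u, hu⟩

end SimpleGraph.Subgraph

namespace PhiVert

variable {k l : ℕ}

def lit : Fin k × Bool → PhiVert k l
  | (x, true) => t x
  | (x, false) => f x

@[simp] theorem lit_ne_u (p : Fin k × Bool) (x : Fin k) : (lit p : PhiVert k l) ≠ u x := by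
  rcases p with ⟨_, _ | _⟩ <;> simp [lit]

@[simp] theorem lit_ne_root (p : Fin k × Bool) : (lit p : PhiVert k l) ≠ root := by
  rcases p with ⟨_, _ | _⟩ <;> simp [lit]

@[simp] theorem lit_ne_clause (p : Fin k × Bool) (i : Fin l) : lit p ≠ clause i := by
  rcases p with ⟨_, _ | _⟩ <;> simp [lit]

@[simp] theorem lit_inj {p q : Fin k × Bool} : (lit p : PhiVert k l) = lit q ↔ p = q := by
  rcases p with ⟨x, _ | _⟩ <;> rcases q with ⟨y, _ | _⟩ <;> simp [lit]

def sumEquiv : (Fin k × Bool) ⊕ Fin k ⊕ Unit ⊕ Fin l ≃ PhiVert k l where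
  toFun := Sum.elim lit (Sum.elim u (Sum.elim (fun _ => root) clause))
  invFun
    | t x => .inl (x, true)
    | f x => .inl (x, false)
    | u x => .inr (.inl x)
    | root => .inr (.inr (.inl ()))
    | clause i => .inr (.inr (.inr i))
  left_inv := by rintro (⟨x, _ | _⟩ | x | ⟨⟩ | i) <;> rfl
  right_inv := by rintro (x | x | x | _ | i) <;> rfl

/-- Every edge of `G_φ` joins a literal vertex to `u_x` (code `inl`), to the root (`inr ∘ inl`)
or to a clause vertex `v_i` (`inr ∘ inr`). -/
abbrev EdgeCode (k l : ℕ) := (Fin k × Bool) ⊕ (Fin k × Bool) ⊕ (Fin l × (Fin k × Bool))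

def edge : EdgeCode k l → Sym2 (PhiVert k l)
  | .inl p => s(u p.1, lit p)
  | .inr (.inl p) => s(root, lit p)
  | .inr (.inr (i, p)) => s(clause i, lit p)

def IsEdge (φ : Fin l → Fin k → Option Bool) : EdgeCode k l → Prop
  | .inr (.inr (i, x, b)) => φ i x = some b
  | _ => True

noncomputable def weight : EdgeCode k l → ℝ
  | .inl _ => 1
  | .inr (.inl _) => 11
  | .inr (.inr (i, _)) => 11 ^ ((i : ℕ) + 2)

theorem edge_injective : Function.Injective (edge : EdgeCode k l → _) := by
  rintro (p | p | ⟨i, p⟩) (q | q | ⟨j, q⟩) h <;> simp_all [edge]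

theorem phiAdj_iff_exists_edge (φ : Fin l → Fin k → Option Bool) (a b : PhiVert k l) :
    phiAdj φ a b ↔ ∃ c, IsEdge φ c ∧ edge c = s(a, b) := by
  simp only [phiAdj, Sum.exists, Prod.exists, Bool.exists_bool, edge, IsEdge, lit, Sym2.eq_iff]
  aesop

section SteinerTree

variable {φ : Fin l → Fin k → Option Bool} {G : SimpleGraph (PhiVert k l)}
  {w : Sym2 (PhiVert k l) → ℝ}

theorem edgeSet_eq_image_edge (hG : ∀ a b, G.Adj a b ↔ phiAdj φ a b) :
    G.edgeSet = edge '' {c | IsEdge φ c} := by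
  ext e
  induction e using Sym2.ind with
  | _ a b => simp [hG, phiAdj_iff_exists_edge]

theorem weight_edge (hw1 : ∀ x : Fin k, w s(t x, u x) = 1) (hw2 : ∀ x : Fin k, w s(u x, f x) = 1)
    (hw3 : ∀ x : Fin k, w s(root, t x) = 11) (hw4 : ∀ x : Fin k, w s(root, f x) = 11)
    (hw5 : ∀ i x, φ i x = some true → w s(clause i, t x) = 11 ^ ((i : ℕ) + 2))
    (hw6 : ∀ i x, φ i x = some false → w s(clause i, f x) = 11 ^ ((i : ℕ) + 2))
    (c : EdgeCode k l) (hc : IsEdge φ c) : w (edge c) = weight c := by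
  rcases c with ⟨x, _ | _⟩ | ⟨x, _ | _⟩ | ⟨i, x, _ | _⟩ <;> simp only [edge, lit, weight]
  · exact hw2 x
  · exact Sym2.eq_swap ▸ hw1 x
  · exact hw4 x
  · exact hw3 x
  · exact hw6 i x hc
  · exact hw5 i x hc

theorem isEdge_of_edge_mem {E : Set (Sym2 (PhiVert k l))} (hE : E ⊆ edge '' {c | IsEdge φ c})
    {c : EdgeCode k l} (hc : edge c ∈ E) : IsEdge φ c := by
  obtain ⟨c', hc', h⟩ := hE hc
  exact edge_injective h ▸ hc'

open Classical in
noncomputable def unitEdges (E : Set (Sym2 (PhiVert k l))) : Finset (Fin k × Bool) :=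
  {p | edge (.inl p) ∈ E}

open Classical in
noncomputable def rootEdges (E : Set (Sym2 (PhiVert k l))) : Finset (Fin k × Bool) :=
  {p | edge (.inr (.inl p)) ∈ E}

open Classical in
noncomputable def clauseEdges (E : Set (Sym2 (PhiVert k l))) : Finset (Fin l × (Fin k × Bool)) :=
  {q | edge (.inr (.inr q)) ∈ E}

open Classical in
noncomputable def litsIn (S : Set (PhiVert k l)) : Finset (Fin k × Bool) :=
  {p | lit p ∈ S}

open Classical in
@[simp] theorem mem_unitEdges {E : Set (Sym2 (PhiVert k l))} {p : Fin k × Bool} :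
    p ∈ unitEdges E ↔ edge (.inl p) ∈ E := by
  simp [unitEdges]

open Classical in
@[simp] theorem mem_rootEdges {E : Set (Sym2 (PhiVert k l))} {p : Fin k × Bool} :
    p ∈ rootEdges E ↔ edge (.inr (.inl p)) ∈ E := by
  simp [rootEdges]

open Classical in
@[simp] theorem mem_clauseEdges {E : Set (Sym2 (PhiVert k l))} {q : Fin l × (Fin k × Bool)} :
    q ∈ clauseEdges E ↔ edge (.inr (.inr q)) ∈ E := by
  simp [clauseEdges]

open Classical in
@[simp] theorem mem_litsIn {S : Set (PhiVert k l)} {p : Fin k × Bool} :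
    p ∈ litsIn S ↔ lit p ∈ S := by
  simp [litsIn]

theorem finsum_mem_eq_sum_codes {M : Type*} [AddCommMonoid M] {E : Set (Sym2 (PhiVert k l))}
    (hE : E ⊆ range edge) (g : Sym2 (PhiVert k l) → M) :
    ∑ᶠ e ∈ E, g e = ∑ p ∈ unitEdges E, g (edge (.inl p))
      + ∑ p ∈ rootEdges E, g (edge (.inr (.inl p)))
      + ∑ q ∈ clauseEdges E, g (edge (.inr (.inr q))) := by
  classical
  rw [finsum_mem_eq_sum_filter_of_injective edge_injective hE]
  simp only [Finset.sum_filter, Fintype.sum_sum_type, unitEdges, rootEdges, clauseEdges, add_assoc]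

theorem ncard_eq_card_codes {E : Set (Sym2 (PhiVert k l))} (hE : E ⊆ range edge) :
    E.ncard = #(unitEdges E) + #(rootEdges E) + #(clauseEdges E) := by
  simpa using finsum_mem_eq_sum_codes hE (fun _ => (1 : ℕ))

theorem finsum_weight_eq {E : Set (Sym2 (PhiVert k l))} (hE : E ⊆ edge '' {c | IsEdge φ c})
    (hw : ∀ c, IsEdge φ c → w (edge c) = weight c) :
    ∑ᶠ e ∈ E, w e = #(unitEdges E) + 11 * #(rootEdges E)
      + ∑ q ∈ clauseEdges E, (11 : ℝ) ^ ((q.1 : ℕ) + 2) := by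
  have hw' : ∀ c, edge c ∈ E → w (edge c) = weight c := fun c hc =>
    hw c (isEdge_of_edge_mem hE hc)
  rw [finsum_mem_eq_sum_codes (hE.trans (image_subset_range _ _)),
    Finset.sum_congr rfl fun p hp => hw' _ (mem_unitEdges.1 hp),
    Finset.sum_congr rfl fun p hp => hw' _ (mem_rootEdges.1 hp),
    Finset.sum_congr rfl fun q hq => hw' _ (mem_clauseEdges.1 hq)]
  simp [weight, mul_comm]

theorem ncard_eq_of_terminals_subset {S : Set (PhiVert k l)} (hS : phiTerminals k l ⊆ S) :
    S.ncard = #(litsIn S) + k + 1 + l := by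
  classical
  have hu : ∀ x, u x ∈ S := fun x => hS (by simp [phiTerminals])
  have hroot : root ∈ S := hS (by simp [phiTerminals])
  have hclause : ∀ i, clause i ∈ S := fun i => hS (by simp [phiTerminals])
  rw [← finsum_one, finsum_mem_eq_sum_filter_of_injective sumEquiv.injective (by simp)]
  simp only [Finset.sum_filter, Fintype.sum_sum_type]
  simp [sumEquiv, hu, hroot, hclause, litsIn, add_assoc]
  exact (Finset.card_filter _ _).symm

theorem unitEdges_subset_litsIn (T : G.Subgraph) : unitEdges T.edgeSet ⊆ litsIn T.verts :=
  fun _ hp => mem_litsIn.2 (T.mem_verts_of_mem_edge (mem_unitEdges.1 hp) (Sym2.mem_mk_right _ _))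

theorem exists_mem_unitEdges (hG : G.edgeSet ⊆ range edge) {T : G.Subgraph} (hT : T.Connected)
    (hterm : phiTerminals k l ⊆ T.verts) (x : Fin k) : ∃ b, (x, b) ∈ unitEdges T.edgeSet := by
  obtain ⟨v, hv⟩ := hT.exists_adj (hterm (by simp [phiTerminals]) : u x ∈ T.verts)
    (hterm (by simp [phiTerminals]) : root ∈ T.verts) (by simp)
  obtain ⟨⟨y, b⟩ | p | ⟨i, p⟩, hc⟩ := hG (G.mem_edgeSet.2 (T.adj_sub hv))
  all_goals simp [edge] at hc
  obtain ⟨rfl, rfl⟩ := hc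
  exact ⟨b, by simpa [edge] using hv⟩

theorem exists_mem_clauseEdges (hG : G.edgeSet ⊆ range edge) {T : G.Subgraph} (hT : T.Connected)
    (hterm : phiTerminals k l ⊆ T.verts) (i : Fin l) : ∃ p, (i, p) ∈ clauseEdges T.edgeSet := by
  obtain ⟨v, hv⟩ := hT.exists_adj (hterm (by simp [phiTerminals]) : clause i ∈ T.verts)
    (hterm (by simp [phiTerminals]) : root ∈ T.verts) (by simp)
  obtain ⟨p | p | ⟨j, p⟩, hc⟩ := hG (G.mem_edgeSet.2 (T.adj_sub hv))
  all_goals simp [edge] at hc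
  obtain ⟨rfl, rfl⟩ := hc
  exact ⟨p, by simpa [edge] using hv⟩

theorem card_litsIn_le (hE : G.edgeSet = edge '' {c | IsEdge φ c})
    (hw : ∀ c, IsEdge φ c → w (edge c) = weight c) {T : G.Subgraph} (hT : T.Connected)
    (hterm : phiTerminals k l ⊆ T.verts)
    (hcost : ∑ᶠ e ∈ T.edgeSet, w e ≤ 12 * k + ∑ i : Fin l, (11 : ℝ) ^ ((i : ℕ) + 2)) :
    #(litsIn T.verts) ≤ k := by
  have hG : G.edgeSet ⊆ range edge := hE ▸ image_subset_range _ _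
  have hTE : T.edgeSet ⊆ edge '' {c | IsEdge φ c} := hE ▸ T.edgeSet_subset
  have hsize := hT.ncard_verts_le_ncard_edgeSet_add_one
  rw [ncard_eq_of_terminals_subset hterm, ncard_eq_card_codes (hTE.trans (image_subset_range _ _))]
    at hsize
  rw [finsum_weight_eq hTE hw] at hcost
  have hU : ∀ x, ∃ p ∈ unitEdges T.edgeSet, p.1 = x := fun x =>
    let ⟨b, hb⟩ := exists_mem_unitEdges hG hT hterm x; ⟨(x, b), hb, rfl⟩
  have hC : ∀ i, ∃ q ∈ clauseEdges T.edgeSet, q.1 = i := fun i =>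
    let ⟨p, hp⟩ := exists_mem_clauseEdges hG hT hterm i; ⟨(i, p), hp, rfl⟩
  have hUL := Finset.card_le_card (unitEdges_subset_litsIn T)
  have hkU : k ≤ #(unitEdges T.edgeSet) := by
    simpa using Finset.card_le_card_of_surjOn (t := Finset.univ) Prod.fst fun x _ => hU x
  have hlC : l ≤ #(clauseEdges T.edgeSet) := by
    simpa using Finset.card_le_card_of_surjOn (t := Finset.univ) Prod.fst fun i _ => hC i
  have hclause := (clauseEdges T.edgeSet).sum_add_mul_card_le_sum_fst hC
    (a := fun i : Fin l => (11 : ℝ) ^ ((i : ℕ) + 2)) (m := 11 ^ 2) fun i =>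
      pow_le_pow_right₀ (by norm_num) (Nat.le_add_left 2 i)
  simp only [Fintype.card_fin] at hclause
  rify at hsize hUL hkU hlC ⊢
  linarith

theorem exists_satisfying_of_steinerTree (hE : G.edgeSet = edge '' {c | IsEdge φ c})
    (hw : ∀ c, IsEdge φ c → w (edge c) = weight c) {T : G.Subgraph} (hT : T.Connected)
    (hterm : phiTerminals k l ⊆ T.verts)
    (hcost : ∑ᶠ e ∈ T.edgeSet, w e ≤ 12 * k + ∑ i : Fin l, (11 : ℝ) ^ ((i : ℕ) + 2)) :
    ∃ A : Fin k → Bool, ∀ i : Fin l, ∃ (x : Fin k) (b : Bool), φ i x = some b ∧ A x = b := by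
  classical
  have hG : G.edgeSet ⊆ range edge := hE ▸ image_subset_range _ _
  have hsingle : Set.InjOn Prod.fst (litsIn T.verts : Set (Fin k × Bool)) := by
    refine Finset.injOn_of_surjOn_of_card_le (t := Finset.univ) _ (fun _ _ => by simp)
      (fun x _ => ?_) (by simpa using card_litsIn_le hE hw hT hterm hcost)
    obtain ⟨b, hb⟩ := exists_mem_unitEdges hG hT hterm x
    exact ⟨(x, b), unitEdges_subset_litsIn T hb, rfl⟩
  refine ⟨fun x => decide (lit (x, true) ∈ T.verts), fun i => ?_⟩
  obtain ⟨⟨x, b⟩, hq⟩ := exists_mem_clauseEdges hG hT hterm i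
  rw [mem_clauseEdges] at hq
  have hlit : lit (x, b) ∈ T.verts := T.mem_verts_of_mem_edge hq (Sym2.mem_mk_right _ _)
  refine ⟨x, b, isEdge_of_edge_mem (hE ▸ T.edgeSet_subset) hq, ?_⟩
  cases b
  · have hf : lit (x, true) ∉ T.verts := fun ht => by
      simpa using @hsingle (x, false) (by simpa using hlit) (x, true) (by simpa using ht) rfl
    simpa using hf
  · simpa using hlit

def treeCodes (A : Fin k → Bool) (x : Fin l → Fin k) : Fin k ⊕ Fin k ⊕ Fin l → EdgeCode k l :=
  Sum.map (fun y => (y, A y)) (Sum.map (fun y => (y, A y)) fun i => (i, x i, A (x i)))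

theorem treeCodes_injective (A : Fin k → Bool) (x : Fin l → Fin k) :
    Function.Injective (treeCodes A x) :=
  Sum.map_injective.2 ⟨fun _ _ h => congrArg Prod.fst h,
    Sum.map_injective.2 ⟨fun _ _ h => congrArg Prod.fst h, fun _ _ h => congrArg Prod.fst h⟩⟩

theorem sum_weight_treeCodes (A : Fin k → Bool) (x : Fin l → Fin k) :
    ∑ j, weight (treeCodes A x j) = 12 * k + ∑ i : Fin l, (11 : ℝ) ^ ((i : ℕ) + 2) := by
  simp [treeCodes, weight, Fintype.sum_sum_type]
  ring

theorem exists_steinerTree_of_satisfying (hE : G.edgeSet = edge '' {c | IsEdge φ c})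
    (hw : ∀ c, IsEdge φ c → w (edge c) = weight c) {A : Fin k → Bool}
    (hA : ∀ i : Fin l, ∃ (x : Fin k) (b : Bool), φ i x = some b ∧ A x = b) :
    ∃ T : G.Subgraph, T.Connected ∧ phiTerminals k l ⊆ T.verts ∧
      ∑ᶠ e ∈ T.edgeSet, w e ≤ 12 * k + ∑ i : Fin l, (11 : ℝ) ^ ((i : ℕ) + 2) := by
  have hA' : ∀ i, ∃ x, φ i x = some (A x) := fun i => by
    obtain ⟨x, _, h, rfl⟩ := hA i
    exact ⟨x, h⟩
  choose x hx using hA'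
  have hσ : ∀ j, IsEdge φ (treeCodes A x j) := by
    rintro (y | y | i) <;> simp [treeCodes, IsEdge, hx]
  have hFG : range (edge ∘ treeCodes A x) ⊆ G.edgeSet := by
    rintro _ ⟨j, rfl⟩
    exact hE ▸ ⟨_, hσ j, rfl⟩
  let T := Subgraph.ofEdgeSet (insert root {v | ∃ e ∈ range (edge ∘ treeCodes A x), v ∈ e}) _ hFG
    fun e he _ hv => Or.inr ⟨e, he, hv⟩
  have hr : root ∈ T.verts := Set.mem_insert _ _
  have hlit : ∀ y, T.Adj root (lit (y, A y)) := fun y => ⟨.inr (.inl y), rfl⟩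
  have hu : ∀ y, T.Adj (lit (y, A y)) (u y) := fun y => ⟨.inl y, Sym2.eq_swap⟩
  have hcl : ∀ i, T.Adj (lit (x i, A (x i))) (clause i) := fun i => ⟨.inr (.inr i), Sym2.eq_swap⟩
  refine ⟨T, Subgraph.connected_of_forall_reachable hr ?_, ?_, ?_⟩
  · rintro v (rfl | ⟨_, ⟨y | y | i, rfl⟩, hv⟩)
    · rfl
    all_goals
      simp only [treeCodes, edge, Function.comp_apply, Sum.map_inl, Sum.map_inr, Sym2.mem_iff] at hv
      rcases hv with rfl | rfl
    · exact (hlit y).coe.reachable.trans (hu y).coe.reachable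
    · exact (hlit y).coe.reachable
    · rfl
    · exact (hlit y).coe.reachable
    · exact (hlit (x i)).coe.reachable.trans (hcl i).coe.reachable
    · exact (hlit (x i)).coe.reachable
  · rintro _ (⟨y, rfl⟩ | rfl | ⟨i, rfl⟩)
    exacts [(hu y).snd_mem, hr, (hcl i).snd_mem]
  · rw [show T.edgeSet = _ from Subgraph.edgeSet_ofEdgeSet .., finsum_mem_range
      (edge_injective.comp (treeCodes_injective A x)), finsum_eq_sum_of_fintype,
      ← sum_weight_treeCodes A x]
    exact (Finset.sum_congr rfl fun j _ => hw _ (hσ j)).le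

end SteinerTree

end PhiVert

/-- In `G_φ` there is a Steiner tree (a connected subgraph containing all
terminals) of cost at most `12k + Σ_{i=1}^{ℓ} 11^{i+1}` iff `φ` is satisfiable. -/
theorem stmt9 {k l : ℕ} (φ : Fin l → Fin k → Option Bool)
    (G : SimpleGraph (PhiVert k l)) (w : Sym2 (PhiVert k l) → ℝ)
    (hG : ∀ a b : PhiVert k l, G.Adj a b ↔ phiAdj φ a b)
    (hw1 : ∀ x : Fin k, w s(PhiVert.t x, PhiVert.u x) = 1)
    (hw2 : ∀ x : Fin k, w s(PhiVert.u x, PhiVert.f x) = 1)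
    (hw3 : ∀ x : Fin k, w s(PhiVert.root, PhiVert.t x) = 11)
    (hw4 : ∀ x : Fin k, w s(PhiVert.root, PhiVert.f x) = 11)
    (hw5 : ∀ (i : Fin l) (x : Fin k), φ i x = some true →
      w s(PhiVert.clause i, PhiVert.t x) = 11 ^ ((i : ℕ) + 2))
    (hw6 : ∀ (i : Fin l) (x : Fin k), φ i x = some false →
      w s(PhiVert.clause i, PhiVert.f x) = 11 ^ ((i : ℕ) + 2))
 :
    (∃ T : G.Subgraph, T.Connected ∧ phiTerminals k l ⊆ T.verts ∧
        ∑ᶠ e ∈ T.edgeSet, w e ≤ 12 * k + ∑ i : Fin l, (11 : ℝ) ^ ((i : ℕ) + 2)) ↔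
      ∃ A : Fin k → Bool, ∀ i : Fin l, ∃ (x : Fin k) (b : Bool),
        φ i x = some b ∧ A x = b := by
  have hE := PhiVert.edgeSet_eq_image_edge hG
  have hw := PhiVert.weight_edge hw1 hw2 hw3 hw4 hw5 hw6
  exact ⟨fun ⟨_, hT, hterm, hcost⟩ => PhiVert.exists_satisfying_of_steinerTree hE hw hT hterm hcost,
    fun ⟨_, hA⟩ => PhiVert.exists_steinerTree_of_satisfying hE hw hA⟩
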